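/- Let (X_i, R, B) be a rigid C-datum. Then its summand count |R| + |B| + Σ_{i=2}^p m_i is at most n. (This is the combinatorial form of the paper's corollary: every basic τ_d-rigid pair (M, P) over Λ(n,l) satisfies |M| + |P| ≤ |Λ| = n.) -/

import Mathlib

open scoped Classical

/-- The numerical setup under which the truncated linear Nakayama algebra `Λ(n,l)`
admits a `d`-cluster tilting subcategory, together with the integers `s i`
(defined by `2 * s i = …`). -/
structure NakSetup where
  n : ℤ
  l : ℤ
  d : ℤ
  p : ℤ
  s : ℤ → ℤ
  hl : 2 ≤ l
  hd : 2 ≤ d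
  hp : 1 ≤ p
  hn : 2 * n = (p - 1) * ((d - 1) * l + 2) + l
  hcase : l = 2 ∨ (2 < l ∧ Even d ∧ Even p)
  hs_odd : ∀ i, 1 ≤ i → i ≤ p → Odd i → 2 * s i = (i - 1) * (d - 1) * l + 2 * i
  hs_even : ∀ i, 1 ≤ i → i ≤ p → Even i → 2 * s i = (i - 1) * ((d - 1) * l + 2) + l

/-- A `C`-datum: subsets `X i ⊆ [1, l-1]` for `2 ≤ i ≤ p` (empty outside this range)
together with disjoint subsets `R, B ⊆ [1, n]`. -/
structure CDatum (S : NakSetup) where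
  X : ℤ → Finset ℤ
  R : Finset ℤ
  B : Finset ℤ
  hX : ∀ i, X i ⊆ Finset.Icc 1 (S.l - 1)
  hXout : ∀ i, ¬(2 ≤ i ∧ i ≤ S.p) → X i = ∅
  hR : R ⊆ Finset.Icc 1 S.n
  hB : B ⊆ Finset.Icc 1 S.n
  hRB : Disjoint R B

namespace CDatum

variable {S : NakSetup}

/-- `m i = |X i|` (as an integer). -/
noncomputable def m (D : CDatum S) (i : ℤ) : ℤ := (D.X i).card

/-- `l_i`: the minimum of `X i`, or `l` if `X i = ∅`. -/
noncomputable def lo (D : CDatum S) (i : ℤ) : ℤ :=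
  if h : (D.X i).Nonempty then (D.X i).min' h else S.l

/-- `n_i`: the maximum of `X i`, or `0` if `X i = ∅`. -/
noncomputable def hi (D : CDatum S) (i : ℤ) : ℤ :=
  if h : (D.X i).Nonempty then (D.X i).max' h else 0

/-- The interval `𝖡_i`. -/
noncomputable def BI (D : CDatum S) (i : ℤ) : Finset ℤ :=
  if Odd i then Finset.Icc (S.s i) (S.s i + D.hi i - 1)
  else Finset.Icc (S.s i - D.hi i + 1) (S.s i)

/-- The interval `𝖱_i`. -/
noncomputable def RI (D : CDatum S) (i : ℤ) : Finset ℤ :=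
  if Odd i then Finset.Icc (S.s (i - 1) - (S.l - D.lo i) + 1) (S.s (i - 1))
  else Finset.Icc (S.s (i - 1)) (S.s (i - 1) + (S.l - D.lo i) - 1)

/-- A `C`-datum is rigid (the combinatorial form of being a `τ_d`-rigid pair). -/
def Rigid (D : CDatum S) : Prop :=
  (∀ x ∈ D.B, ∀ y ∈ D.R, x < y →
      ∃ z, x < z ∧ z + S.l - 2 < y ∧ Finset.Icc z (z + S.l - 2) ∩ (D.R ∪ D.B) = ∅) ∧
  (∀ i, 2 ≤ i → i ≤ S.p → Odd i →
      D.hi (i - 1) + D.hi i ≤ S.l - 1 ∧ S.l + 1 ≤ D.lo i + D.lo (i + 1) ∧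
      (S.d = 2 → D.hi i ≤ D.lo (i + 2) + 1 ∧ D.hi (i - 2) ≤ D.lo i + 1)) ∧
  (∀ i, 2 ≤ i → i ≤ S.p → Even i →
      D.hi i + D.hi (i + 1) ≤ S.l - 1 ∧ S.l + 1 ≤ D.lo (i - 1) + D.lo i) ∧
  (∀ i, 2 ≤ i → i ≤ S.p → D.R ∩ D.RI i = ∅ ∧ D.B ∩ D.BI i = ∅)

/-- The left endpoint of `Ξ(i, i+k)` (the left endpoint of `𝖱_i`). -/
noncomputable def xiLo (D : CDatum S) (i : ℤ) : ℤ :=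
  if Odd i then S.s (i - 1) - (S.l - D.lo i) + 1 else S.s (i - 1)

/-- The right endpoint of `Ξ(i, i+k)`, depending on `j = i + k`
(the right endpoint of `𝖡_{i+k}`). -/
noncomputable def xiHi (D : CDatum S) (j : ℤ) : ℤ :=
  if Even j then S.s j else S.s j + D.hi j - 1

/-- The interval `Ξ(i, i+k)`. -/
noncomputable def Xi (D : CDatum S) (i k : ℤ) : Finset ℤ :=
  Finset.Icc (D.xiLo i) (D.xiHi (i + k))

/-- The union `𝖡_2 ∪ … ∪ 𝖡_p`. -/
noncomputable def BigB (D : CDatum S) : Finset ℤ :=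
  (Finset.Icc 2 S.p).biUnion fun i => D.BI i

/-- The union `𝖱_2 ∪ … ∪ 𝖱_p`. -/
noncomputable def BigR (D : CDatum S) : Finset ℤ :=
  (Finset.Icc 2 S.p).biUnion fun i => D.RI i

/-- The interval `I` is support. -/
def IsSupport (D : CDatum S) (I : Finset ℤ) : Prop :=
  D.R ∩ I = ∅ ∧ D.B ∩ I = I \ D.BigB

/-- The interval `I` is rigid. -/
def IsRigidI (D : CDatum S) (I : Finset ℤ) : Prop :=
  D.B ∩ I = ∅ ∧ D.R ∩ I = I \ D.BigR

/-- The interval `I` is support to rigid at `x ∈ I`. -/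
def IsSuppToRigid (D : CDatum S) (I : Finset ℤ) (x : ℤ) : Prop :=
  x ∈ I ∧ D.B ∩ I = {y ∈ I | y ≤ x} ∧ (D.B ∩ I).Nonempty ∧
    D.R ∩ I = {y ∈ I | x + S.l ≤ y} ∧ (D.R ∩ I).Nonempty

/-- The interval `I` is rigid to support at `x ∈ I`. -/
def IsRigidToSupp (D : CDatum S) (I : Finset ℤ) (x : ℤ) : Prop :=
  x ∈ I ∧ D.R ∩ I = {y ∈ I | y ≤ x} ∧ (D.R ∩ I).Nonempty ∧
    D.B ∩ I = {y ∈ I | x + 1 ≤ y} ∧ (D.B ∩ I).Nonempty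

/-- `(X_i, …, X_{i+k})` is an admissible configuration (types (I)–(VIII)). -/
def Admissible (D : CDatum S) (i k : ℤ) : Prop :=
  2 ≤ i ∧ i + k ≤ S.p ∧ 0 ≤ k ∧
  (∀ j, 0 ≤ j → j ≤ k → (D.X (i + j)).Nonempty) ∧
  ((k = 0 ∧ D.lo i = 1 ∧ D.hi i < S.l - 1 ∧ D.IsSupport (D.Xi i k)) ∨
   (k = 0 ∧ 1 < D.lo i ∧ D.hi i = S.l - 1 ∧ D.IsRigidI (D.Xi i k)) ∨
   (k = 0 ∧ D.lo i = 1 ∧ D.hi i = S.l - 1 ∧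
     (D.IsSupport (D.Xi i k) ∨ D.IsRigidI (D.Xi i k) ∨
       ∃ x ∈ D.Xi i k \ D.BI i, D.IsSuppToRigid (D.Xi i k) x)) ∨
   (k = 1 ∧ Odd i ∧ D.hi i = S.l - 1 ∧ D.hi (i + 1) = S.l - 1 ∧
     D.m i + D.m (i + 1) < S.l - 1 ∧ D.IsRigidI (D.Xi i k)) ∨
   (k = 1 ∧ Even i ∧ D.lo i = 1 ∧ D.lo (i + 1) = 1 ∧
     D.m i + D.m (i + 1) < S.l - 1 ∧ D.IsSupport (D.Xi i k)) ∨
   (k = 1 ∧ Odd i ∧ D.hi i = S.l - 1 ∧ D.hi (i + 1) = S.l - 1 ∧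
     D.m i + D.m (i + 1) = S.l - 1 ∧
     (D.IsRigidI (D.Xi i k) ∨
       ∃ x ∈ Finset.Icc (S.s i - (S.l - D.m (i + 1))) (S.s i - 1),
         D.IsSuppToRigid (D.Xi i k) x)) ∨
   (k = 1 ∧ Even i ∧ D.lo i = 1 ∧ D.lo (i + 1) = 1 ∧
     D.m i + D.m (i + 1) = S.l - 1 ∧
     (D.IsSupport (D.Xi i k) ∨
       ∃ x ∈ Finset.Icc (S.s i - (S.l - 1)) (S.s i - D.m i),
         D.IsSuppToRigid (D.Xi i k) x)) ∨
   (k = 2 ∧ S.d = 2 ∧ Even i ∧ D.lo i = 1 ∧ D.lo (i + 1) = S.l - D.lo (i + 2) + 1 ∧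
     D.hi (i + 1) = S.l - D.hi i - 1 ∧ D.hi (i + 2) = S.l - 1 ∧
     ∃ x ∈ Finset.Icc (S.s (i + 1) - D.lo (i + 2)) (S.s i - D.hi i),
       D.IsSuppToRigid (D.Xi i k) x))

/-- The configuration on `[i, i+k]` is full: `m_{i+j} = n_{i+j} - l_{i+j} + 1`. -/
def Full (D : CDatum S) (i k : ℤ) : Prop :=
  ∀ j, 0 ≤ j → j ≤ k → D.m (i + j) = D.hi (i + j) - D.lo (i + j) + 1

/-- `[a, b]` is a maximal run of indices with `X` nonempty
(an interval of the diagonal partition). -/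
def IsBlock (D : CDatum S) (a b : ℤ) : Prop :=
  2 ≤ a ∧ b ≤ S.p ∧ a ≤ b ∧ (∀ j, a ≤ j → j ≤ b → (D.X j).Nonempty) ∧
    D.X (a - 1) = ∅ ∧ D.X (b + 1) = ∅

/-- `[a, b]` is the first interval of the diagonal partition. -/
def FirstBlock (D : CDatum S) (a b : ℤ) : Prop :=
  D.IsBlock a b ∧ ∀ j, j < a → D.X j = ∅

/-- `[a, b]` is the last interval of the diagonal partition. -/
def LastBlock (D : CDatum S) (a b : ℤ) : Prop :=
  D.IsBlock a b ∧ ∀ j, b < j → D.X j = ∅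

/-- `[a, b]` and `[a', b']` are consecutive intervals of the diagonal partition. -/
def ConsecBlocks (D : CDatum S) (a b a' b' : ℤ) : Prop :=
  D.IsBlock a b ∧ D.IsBlock a' b' ∧ b < a' ∧ ∀ j, b < j → j < a' → D.X j = ∅

/-- The diagonal component `T = {i ∈ [2, p] : X i ≠ ∅}`. -/
noncomputable def T (D : CDatum S) : Finset ℤ :=
  {i ∈ Finset.Icc 2 S.p | (D.X i).Nonempty}

/-- The configuration on the block `[a, b]` is full admissible of type (III). -/
def FullType3 (D : CDatum S) (a b : ℤ) : Prop :=
  a = b ∧ D.lo a = 1 ∧ D.hi a = S.l - 1 ∧ D.m a = S.l - 1 ∧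
    (D.IsSupport (D.Xi a 0) ∨ D.IsRigidI (D.Xi a 0) ∨
      ∃ x ∈ D.Xi a 0 \ D.BI a, D.IsSuppToRigid (D.Xi a 0) x)

/-- A `Θ`-interval is rigid, support, or rigid to support. -/
def GoodTheta (D : CDatum S) (I : Finset ℤ) : Prop :=
  D.IsRigidI I ∨ D.IsSupport I ∨ ∃ x, D.IsRigidToSupp I x

/-- A `C`-datum is well-configured. -/
def WellConfigured (D : CDatum S) : Prop :=
  (D.T = ∅ ∧ ∃ x, 0 ≤ x ∧ x ≤ S.n ∧ D.R = Finset.Icc 1 x ∧ D.B = Finset.Icc (x + 1) S.n) ∨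
  (D.T.Nonempty ∧
    (∀ a b, D.IsBlock a b → D.Admissible a (b - a) ∧ D.Full a (b - a)) ∧
    (∀ a b a' b', D.ConsecBlocks a b a' b' →
      D.Xi a (b - a) ∩ D.Xi a' (b' - a') = ∅) ∧
    (∀ a b, D.FirstBlock a b → D.GoodTheta (Finset.Icc 1 (D.xiLo a - 1))) ∧
    (∀ a b a' b', D.ConsecBlocks a b a' b' →
      D.GoodTheta (Finset.Icc (D.xiHi b + 1) (D.xiLo a' - 1))) ∧
    (∀ a b, D.LastBlock a b → D.GoodTheta (Finset.Icc (D.xiHi b + 1) S.n)) ∧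
    (∀ a b, D.FirstBlock a b → D.IsRigidI (D.Xi a (b - a)) →
      D.IsRigidI (Finset.Icc 1 (D.xiLo a - 1)) ∨ D.FullType3 a b) ∧
    (∀ a b a' b', D.ConsecBlocks a b a' b' → D.IsRigidI (D.Xi a' (b' - a')) →
      D.IsRigidI (Finset.Icc (D.xiHi b + 1) (D.xiLo a' - 1)) ∨ D.FullType3 a' b') ∧
    (∀ a b a' b', D.ConsecBlocks a b a' b' → D.IsSupport (D.Xi a (b - a)) →
      D.IsSupport (Finset.Icc (D.xiHi b + 1) (D.xiLo a' - 1)) ∨ D.FullType3 a b) ∧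
    (∀ a b, D.LastBlock a b → D.IsSupport (D.Xi a (b - a)) →
      D.IsSupport (Finset.Icc (D.xiHi b + 1) S.n) ∨ D.FullType3 a b))

/-- The summand count `|R| + |B| + Σ_{i=2}^p m_i`. -/
noncomputable def count (D : CDatum S) : ℤ :=
  (D.R.card : ℤ) + (D.B.card : ℤ) + ∑ i ∈ Finset.Icc 2 S.p, D.m i

end CDatum

/-!
Since `R` and `B` are disjoint subsets of `[1, n]`, it suffices to find `m_2 + ⋯ + m_p` free
positions, i.e. positions of `[1, n]` outside `R ∪ B`. A nonempty diagonal `t` offers three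
sources of them: `𝖱_t` if it misses `B` (it always misses `R`), `𝖡_t` if it misses `R`, and
otherwise, for `x ∈ B ∩ 𝖱_t` and `y ∈ R ∩ 𝖡_t`, a window of `l - 1` free positions strictly
between `x` and `y` given by condition (a). Conditions (b1) and (b2) make each source large enough
to pay for `t` together with a neighbour: `𝖱_t` pays for the pair `{2k, 2k + 1}` containing `t`,
`𝖡_t` for odd `t` pays for `t` and `t + 1`, and a window pays for up to three consecutive
diagonals. Sweeping `t = 1, …, p` from left to right, the sets chosen so far always lie to the
left of everything still to be chosen; for `d = 2` this is where the extra condition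
`n_t ≤ l_{t+2} + 1` enters.
-/

open Finset

namespace NakSetup

variable (S : NakSetup)

theorem s_one : S.s 1 = 1 := by
  linarith [S.hs_odd 1 le_rfl S.hp odd_one]

theorem two_mul_s_succ_sub_of_odd {j : ℤ} (hj : Odd j) (h1 : 1 ≤ j) (h2 : j + 1 ≤ S.p) :
    2 * (S.s (j + 1) - S.s j) = S.d * S.l := by
  linear_combination S.hs_even (j + 1) (by omega) h2 hj.add_one - S.hs_odd j h1 (by omega) hj

theorem two_mul_s_succ_sub_of_even {j : ℤ} (hj : Even j) (h1 : 1 ≤ j) (h2 : j + 1 ≤ S.p) :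
    2 * (S.s (j + 1) - S.s j) = (S.d - 2) * S.l + 4 := by
  linear_combination S.hs_odd (j + 1) (by omega) h2 hj.add_one - S.hs_even j h1 (by omega) hj

theorem s_add_two_le_s_succ {j : ℤ} (h1 : 1 ≤ j) (h2 : j + 1 ≤ S.p) :
    S.s j + 2 ≤ S.s (j + 1) := by
  have := S.hd
  have := S.hl
  rcases Int.even_or_odd j with hj | hj
  · nlinarith [S.two_mul_s_succ_sub_of_even hj h1 h2]
  · nlinarith [S.two_mul_s_succ_sub_of_odd hj h1 h2]

theorem s_add_l_le_s_succ_of_odd {j : ℤ} (hj : Odd j) (h1 : 1 ≤ j) (h2 : j + 1 ≤ S.p) :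
    S.s j + S.l ≤ S.s (j + 1) := by
  have := S.hd
  have := S.hl
  nlinarith [S.two_mul_s_succ_sub_of_odd hj h1 h2]

theorem s_pred_add_two_le {i : ℤ} (h2 : 2 ≤ i) (hp : i ≤ S.p) : S.s (i - 1) + 2 ≤ S.s i := by
  simpa using S.s_add_two_le_s_succ (j := i - 1) (by omega) (by omega)

theorem s_pred_add_l_le_of_even {i : ℤ} (hi : Even i) (h2 : 2 ≤ i) (hp : i ≤ S.p) :
    S.s (i - 1) + S.l ≤ S.s i := by
  simpa using S.s_add_l_le_s_succ_of_odd (hi.sub_odd odd_one) (by omega) (by omega)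

theorem s_le_s {a b : ℤ} (h1 : 1 ≤ a) (hab : a ≤ b) (hb : b ≤ S.p) : S.s a ≤ S.s b := by
  induction b, hab using Int.leInduction with
  | base => exact le_rfl
  | succ b hab ih => linarith [ih (by omega), S.s_add_two_le_s_succ (by omega : 1 ≤ b) hb]

theorem one_le_s {j : ℤ} (h1 : 1 ≤ j) (hp : j ≤ S.p) : 1 ≤ S.s j :=
  S.s_one ▸ S.s_le_s le_rfl h1 hp

theorem l_lt_s {j : ℤ} (h2 : 2 ≤ j) (hp : j ≤ S.p) : S.l < S.s j := by
  have h := S.hs_even 2 (by omega) (by omega) even_two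
  have := S.hd
  have := S.hl
  nlinarith [S.s_le_s (by omega : (1 : ℤ) ≤ 2) h2 hp]

theorem l_eq_two_of_odd_p (hp : Odd S.p) : S.l = 2 := by
  rcases S.hcase with h | ⟨-, -, hpe⟩
  · exact h
  · exact absurd hpe (Int.not_even_iff_odd.2 hp)

theorem s_p : S.s S.p = S.n := by
  have hn := S.hn
  rcases Int.even_or_odd S.p with hp | hp
  · linarith [S.hs_even S.p S.hp le_rfl hp]
  · have h := S.hs_odd S.p S.hp le_rfl hp
    rw [S.l_eq_two_of_odd_p hp] at h hn
    linarith

theorem s_le_n {j : ℤ} (h1 : 1 ≤ j) (hp : j ≤ S.p) : S.s j ≤ S.n :=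
  S.s_p ▸ S.s_le_s h1 hp le_rfl

theorem n_nonneg : 0 ≤ S.n := by
  linarith [S.one_le_s S.hp le_rfl, S.s_le_n S.hp le_rfl]

theorem d_eq_two_or_l_eq_two_or_four_le_d : S.d = 2 ∨ S.l = 2 ∨ 4 ≤ S.d := by
  rcases S.hcase with h | ⟨-, hd, -⟩
  · exact Or.inr (Or.inl h)
  · have := Int.even_iff.1 hd
    have := S.hd
    omega

end NakSetup

namespace CDatum

variable {S : NakSetup} (D : CDatum S)

theorem two_le_and_le_p_of_nonempty {i : ℤ} (h : (D.X i).Nonempty) : 2 ≤ i ∧ i ≤ S.p := by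
  by_contra hi
  simp [D.hXout i hi] at h

theorem lo_of_not_nonempty {i : ℤ} (h : ¬(D.X i).Nonempty) : D.lo i = S.l := dif_neg h

theorem hi_of_not_nonempty {i : ℤ} (h : ¬(D.X i).Nonempty) : D.hi i = 0 := dif_neg h

theorem m_of_not_nonempty {i : ℤ} (h : ¬(D.X i).Nonempty) : D.m i = 0 := by
  simp [m, not_nonempty_iff_eq_empty.1 h]

theorem lo_le_of_mem {i x : ℤ} (hx : x ∈ D.X i) : D.lo i ≤ x := by
  rw [lo, dif_pos ⟨x, hx⟩]
  exact min'_le _ _ hx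

theorem le_hi_of_mem {i x : ℤ} (hx : x ∈ D.X i) : x ≤ D.hi i := by
  rw [hi, dif_pos ⟨x, hx⟩]
  exact le_max' _ _ hx

theorem lo_mem {i : ℤ} (h : (D.X i).Nonempty) : D.lo i ∈ D.X i := by
  rw [lo, dif_pos h]
  exact min'_mem _ _

theorem hi_mem {i : ℤ} (h : (D.X i).Nonempty) : D.hi i ∈ D.X i := by
  rw [hi, dif_pos h]
  exact max'_mem _ _

theorem one_le_of_mem {i x : ℤ} (hx : x ∈ D.X i) : 1 ≤ x := (mem_Icc.1 (D.hX i hx)).1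

theorem le_l_sub_one_of_mem {i x : ℤ} (hx : x ∈ D.X i) : x ≤ S.l - 1 := (mem_Icc.1 (D.hX i hx)).2

theorem one_le_lo (i : ℤ) : 1 ≤ D.lo i := by
  by_cases h : (D.X i).Nonempty
  · exact D.one_le_of_mem (D.lo_mem h)
  · linarith [D.lo_of_not_nonempty h, S.hl]

theorem lo_le_l (i : ℤ) : D.lo i ≤ S.l := by
  by_cases h : (D.X i).Nonempty
  · linarith [D.le_l_sub_one_of_mem (D.lo_mem h)]
  · exact (D.lo_of_not_nonempty h).le

theorem hi_nonneg (i : ℤ) : 0 ≤ D.hi i := by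
  by_cases h : (D.X i).Nonempty
  · linarith [D.one_le_of_mem (D.hi_mem h)]
  · exact (D.hi_of_not_nonempty h).ge

theorem hi_le (i : ℤ) : D.hi i ≤ S.l - 1 := by
  by_cases h : (D.X i).Nonempty
  · exact D.le_l_sub_one_of_mem (D.hi_mem h)
  · linarith [D.hi_of_not_nonempty h, S.hl]

theorem m_nonneg (i : ℤ) : 0 ≤ D.m i := Nat.cast_nonneg _

theorem m_le_hi_sub_lo_add_one {i : ℤ} (h : (D.X i).Nonempty) : D.m i ≤ D.hi i - D.lo i + 1 := by
  have hsub : D.X i ⊆ Icc (D.lo i) (D.hi i) :=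
    fun x hx => mem_Icc.2 ⟨D.lo_le_of_mem hx, D.le_hi_of_mem hx⟩
  have hcard := card_le_card hsub
  have := D.lo_le_of_mem (D.hi_mem h)
  rw [Int.card_Icc] at hcard
  unfold m
  omega

theorem m_le_hi (i : ℤ) : D.m i ≤ D.hi i := by
  by_cases h : (D.X i).Nonempty
  · linarith [D.m_le_hi_sub_lo_add_one h, D.one_le_lo i]
  · rw [D.m_of_not_nonempty h, D.hi_of_not_nonempty h]

theorem m_le_l_sub_lo (i : ℤ) : D.m i ≤ S.l - D.lo i := by
  by_cases h : (D.X i).Nonempty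
  · linarith [D.m_le_hi_sub_lo_add_one h, D.hi_le i]
  · rw [D.m_of_not_nonempty h, D.lo_of_not_nonempty h, sub_self]

theorem RI_of_odd {i : ℤ} (h : Odd i) :
    D.RI i = Icc (S.s (i - 1) - (S.l - D.lo i) + 1) (S.s (i - 1)) := if_pos h

theorem RI_of_even {i : ℤ} (h : Even i) :
    D.RI i = Icc (S.s (i - 1)) (S.s (i - 1) + (S.l - D.lo i) - 1) :=
  if_neg (Int.not_odd_iff_even.2 h)

theorem BI_of_odd {i : ℤ} (h : Odd i) : D.BI i = Icc (S.s i) (S.s i + D.hi i - 1) := if_pos h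

theorem BI_of_even {i : ℤ} (h : Even i) : D.BI i = Icc (S.s i - D.hi i + 1) (S.s i) :=
  if_neg (Int.not_odd_iff_even.2 h)

theorem xiLo_of_odd {i : ℤ} (h : Odd i) : D.xiLo i = S.s (i - 1) - (S.l - D.lo i) + 1 := if_pos h

theorem xiLo_of_even {i : ℤ} (h : Even i) : D.xiLo i = S.s (i - 1) :=
  if_neg (Int.not_odd_iff_even.2 h)

theorem xiHi_of_odd {i : ℤ} (h : Odd i) : D.xiHi i = S.s i + D.hi i - 1 :=
  if_neg (Int.not_even_iff_odd.2 h)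

theorem xiHi_of_even {i : ℤ} (h : Even i) : D.xiHi i = S.s i := if_pos h

theorem card_RI (i : ℤ) : (#(D.RI i) : ℤ) = S.l - D.lo i := by
  have := D.lo_le_l i
  rcases Int.even_or_odd i with h | h
  · rw [D.RI_of_even h, Int.card_Icc]
    omega
  · rw [D.RI_of_odd h, Int.card_Icc]
    omega

theorem card_BI (i : ℤ) : (#(D.BI i) : ℤ) = D.hi i := by
  have := D.hi_nonneg i
  rcases Int.even_or_odd i with h | h
  · rw [D.BI_of_even h, Int.card_Icc]
    omega
  · rw [D.BI_of_odd h, Int.card_Icc]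
    omega

theorem xiLo_succ_le_xiHi_add_one (t : ℤ) : D.xiLo (t + 1) ≤ D.xiHi t + 1 := by
  rcases Int.even_or_odd t with ht | ht
  · rw [D.xiLo_of_odd ht.add_one, D.xiHi_of_even ht, add_sub_cancel_right]
    linarith [D.lo_le_l (t + 1)]
  · rw [D.xiLo_of_even ht.add_one, D.xiHi_of_odd ht, add_sub_cancel_right]
    linarith [D.hi_nonneg t]

theorem xiLo_le_xiHi {i : ℤ} (h2 : 2 ≤ i) (hp : i ≤ S.p) : D.xiLo i ≤ D.xiHi i := by
  have := S.s_pred_add_two_le h2 hp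
  rcases Int.even_or_odd i with hi | hi
  · rw [D.xiLo_of_even hi, D.xiHi_of_even hi]
    omega
  · rw [D.xiLo_of_odd hi, D.xiHi_of_odd hi]
    linarith [D.lo_le_l i, D.hi_nonneg i]

theorem xiLo_le_xiLo_succ {i : ℤ} (h2 : 2 ≤ i) (hp : i ≤ S.p) : D.xiLo i ≤ D.xiLo (i + 1) := by
  rcases Int.even_or_odd i with hi | hi
  · rw [D.xiLo_of_even hi, D.xiLo_of_odd hi.add_one, add_sub_cancel_right]
    linarith [S.s_pred_add_l_le_of_even hi h2 hp, D.one_le_lo (i + 1)]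
  · rw [D.xiLo_of_odd hi, D.xiLo_of_even hi.add_one, add_sub_cancel_right]
    linarith [S.s_pred_add_two_le h2 hp, D.lo_le_l i]

theorem one_le_xiLo {i : ℤ} (h2 : 2 ≤ i) (hp : i ≤ S.p) : 1 ≤ D.xiLo i := by
  rcases Int.even_or_odd i with hi | hi
  · rw [D.xiLo_of_even hi]
    exact S.one_le_s (by omega) (by omega)
  · have := Int.odd_iff.1 hi
    rw [D.xiLo_of_odd hi]
    linarith [S.l_lt_s (j := i - 1) (by omega) (by omega), D.one_le_lo i]

theorem xiHi_le_n {i : ℤ} (h2 : 2 ≤ i) (hp : i ≤ S.p) : D.xiHi i ≤ S.n := by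
  rcases Int.even_or_odd i with hi | hi
  · rw [D.xiHi_of_even hi]
    exact S.s_le_n (by omega) hp
  · rw [D.xiHi_of_odd hi]
    have := D.hi_le i
    rcases hp.lt_or_eq with hp | rfl
    · linarith [S.s_add_l_le_s_succ_of_odd hi (by omega) (by omega), S.s_le_n (by omega) hp]
    · linarith [S.s_p, S.l_eq_two_of_odd_p hi]

theorem RI_subset_Icc {i : ℤ} (h2 : 2 ≤ i) (hp : i ≤ S.p) :
    D.RI i ⊆ Icc (D.xiLo i) (D.xiHi i) := by
  intro g hg
  rw [mem_Icc]
  rcases Int.even_or_odd i with hi | hi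
  · rw [D.RI_of_even hi, mem_Icc] at hg
    rw [D.xiLo_of_even hi, D.xiHi_of_even hi]
    have := S.s_pred_add_l_le_of_even hi h2 hp
    have := D.one_le_lo i
    omega
  · rw [D.RI_of_odd hi, mem_Icc] at hg
    rw [D.xiLo_of_odd hi, D.xiHi_of_odd hi]
    have := S.s_pred_add_two_le h2 hp
    have := D.hi_nonneg i
    omega

theorem BI_subset_Icc {i : ℤ} (h2 : 2 ≤ i) (hp : i ≤ S.p) :
    D.BI i ⊆ Icc (D.xiLo i) (D.xiHi i) := by
  intro g hg
  rw [mem_Icc]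
  rcases Int.even_or_odd i with hi | hi
  · rw [D.BI_of_even hi, mem_Icc] at hg
    rw [D.xiLo_of_even hi, D.xiHi_of_even hi]
    have := S.s_pred_add_l_le_of_even hi h2 hp
    have := D.hi_le i
    omega
  · rw [D.BI_of_odd hi, mem_Icc] at hg
    rw [D.xiLo_of_odd hi, D.xiHi_of_odd hi]
    have := S.s_pred_add_two_le h2 hp
    have := D.lo_le_l i
    omega

theorem lt_xiLo_succ_of_mem_RI {i g : ℤ} (hi : Odd i) (h2 : 2 ≤ i) (hp : i ≤ S.p)
    (hg : g ∈ D.RI i) : g < D.xiLo (i + 1) := by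
  rw [D.RI_of_odd hi, mem_Icc] at hg
  rw [D.xiLo_of_even hi.add_one, add_sub_cancel_right]
  linarith [S.s_pred_add_two_le h2 hp]

noncomputable def free : Finset ℤ := Icc 1 S.n \ (D.R ∪ D.B)

theorem card_free : (#D.free : ℤ) = S.n - #D.R - #D.B := by
  have h1 := card_sdiff_add_card_eq_card (union_subset D.hR D.hB)
  have h2 := card_union_of_disjoint D.hRB
  have h3 := Int.card_Icc 1 S.n
  have := S.n_nonneg
  unfold free
  omega

theorem subset_free {i : ℤ} {G : Finset ℤ} (h2 : 2 ≤ i) (hp : i ≤ S.p)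
    (hG : G ⊆ Icc (D.xiLo i) (D.xiHi i)) (hR : Disjoint D.R G) (hB : Disjoint D.B G) :
    G ⊆ D.free := by
  intro g hg
  have := mem_Icc.1 (hG hg)
  have := D.one_le_xiLo h2 hp
  have := D.xiHi_le_n h2 hp
  refine mem_sdiff.2 ⟨mem_Icc.2 ⟨by omega, by omega⟩, ?_⟩
  rw [mem_union, not_or]
  exact ⟨disjoint_right.1 hR hg, disjoint_right.1 hB hg⟩

noncomputable def msum (t : ℤ) : ℤ := ∑ i ∈ Icc 2 t, D.m i

theorem msum_one : D.msum 1 = 0 := by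
  simp [msum]

theorem msum_succ {t : ℤ} (h : 1 ≤ t) : D.msum (t + 1) = D.msum t + D.m (t + 1) := by
  have : Icc 2 (t + 1) = insert (t + 1) (Icc 2 t) := by
    ext x
    simp only [mem_Icc, mem_insert]
    omega
  rw [msum, msum, this, sum_insert (by simp), add_comm]

theorem msum_pred {t : ℤ} (h : 2 ≤ t) : D.msum t = D.msum (t - 1) + D.m t := by
  simpa using D.msum_succ (t := t - 1) (by omega)

variable {D}

theorem Rigid.disjoint_R_RI (hrig : D.Rigid) {i : ℤ} (h2 : 2 ≤ i) (hp : i ≤ S.p) :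
    Disjoint D.R (D.RI i) :=
  disjoint_iff_inter_eq_empty.2 (hrig.2.2.2 i h2 hp).1

theorem Rigid.disjoint_B_BI (hrig : D.Rigid) {i : ℤ} (h2 : 2 ≤ i) (hp : i ≤ S.p) :
    Disjoint D.B (D.BI i) :=
  disjoint_iff_inter_eq_empty.2 (hrig.2.2.2 i h2 hp).2

theorem Rigid.hi_add_hi_succ_le (hrig : D.Rigid) {j : ℤ} (hj : Even j) (h2 : 2 ≤ j)
    (hp : j ≤ S.p) : D.hi j + D.hi (j + 1) ≤ S.l - 1 :=
  (hrig.2.2.1 j h2 hp hj).1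

theorem Rigid.l_lt_lo_add_lo_succ (hrig : D.Rigid) {j : ℤ} (hj : Odd j) (h2 : 2 ≤ j)
    (hp : j ≤ S.p) : S.l < D.lo j + D.lo (j + 1) := by
  linarith [(hrig.2.1 j h2 hp hj).2.1]

theorem Rigid.hi_le_lo_add_two_add_one (hrig : D.Rigid) (hd : S.d = 2) {j : ℤ} (hj : Odd j)
    (h2 : 2 ≤ j) (hp : j ≤ S.p) : D.hi j ≤ D.lo (j + 2) + 1 :=
  ((hrig.2.1 j h2 hp hj).2.2 hd).1

theorem Rigid.exists_window (hrig : D.Rigid) {x y : ℤ} (hx : x ∈ D.B) (hy : y ∈ D.R)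
    (hxy : x < y) : ∃ W ⊆ D.free, (#W : ℤ) = S.l - 1 ∧ ∀ w ∈ W, x < w ∧ w < y := by
  obtain ⟨z, hxz, hzy, hz⟩ := hrig.1 x hx y hy hxy
  have hx' := mem_Icc.1 (D.hB hx)
  have hy' := mem_Icc.1 (D.hR hy)
  have := S.hl
  refine ⟨Icc z (z + S.l - 2), fun w hw => ?_, by rw [Int.card_Icc]; omega, fun w hw => ?_⟩
  · have hw' := mem_Icc.1 hw
    refine mem_sdiff.2 ⟨mem_Icc.2 ⟨by omega, by omega⟩, fun h => ?_⟩
    exact (eq_empty_iff_forall_notMem.1 hz) w (mem_inter.2 ⟨hw, h⟩)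
  · have := mem_Icc.1 hw
    omega

theorem Rigid.RI_subset_free (hrig : D.Rigid) {i : ℤ} (h2 : 2 ≤ i) (hp : i ≤ S.p)
    (hB : Disjoint D.B (D.RI i)) : D.RI i ⊆ D.free :=
  D.subset_free h2 hp (D.RI_subset_Icc h2 hp) (hrig.disjoint_R_RI h2 hp) hB

theorem Rigid.BI_subset_free (hrig : D.Rigid) {i : ℤ} (h2 : 2 ≤ i) (hp : i ≤ S.p)
    (hR : Disjoint D.R (D.BI i)) : D.BI i ⊆ D.free :=
  D.subset_free h2 hp (D.BI_subset_Icc h2 hp) hR (hrig.disjoint_B_BI h2 hp)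

theorem Rigid.lt_of_mem_RI_of_mem_BI (hrig : D.Rigid) {i x y : ℤ} (h2 : 2 ≤ i) (hp : i ≤ S.p)
    (hxB : x ∈ D.B) (hx : x ∈ D.RI i) (hy : y ∈ D.BI i) : x < y := by
  have hxBI : x ∉ D.BI i := disjoint_left.1 (hrig.disjoint_B_BI h2 hp) hxB
  rcases Int.even_or_odd i with hi | hi
  · rw [D.RI_of_even hi, mem_Icc] at hx
    rw [D.BI_of_even hi, mem_Icc] at hxBI hy
    have := S.s_pred_add_l_le_of_even hi h2 hp
    have := D.one_le_lo i
    omega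
  · rw [D.RI_of_odd hi, mem_Icc] at hx
    rw [D.BI_of_odd hi, mem_Icc] at hy
    have := S.s_pred_add_two_le h2 hp
    omega

theorem Rigid.disjoint_R_BI_of_even (hrig : D.Rigid) {t : ℤ} (ht : Even t)
    (hX : (D.X (t + 1)).Nonempty) : Disjoint D.R (D.BI t) := by
  obtain ⟨h2, hp⟩ := D.two_le_and_le_p_of_nonempty hX
  have : 2 ≤ t := by
    have := Int.even_iff.1 ht
    omega
  refine (hrig.disjoint_R_RI h2 hp).mono_right ?_
  rw [D.BI_of_even ht, D.RI_of_odd ht.add_one, add_sub_cancel_right]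
  refine Icc_subset_Icc ?_ le_rfl
  linarith [hrig.hi_add_hi_succ_le ht this (by omega), D.lo_le_of_mem (D.hi_mem hX)]

theorem Rigid.xiHi_lt_xiLo_add_two (hrig : D.Rigid) {t : ℤ} (h1 : 1 ≤ t) (hp : t + 1 ≤ S.p) :
    D.xiHi t < D.xiLo (t + 2) := by
  rcases Int.even_or_odd t with ht | ht
  · rw [D.xiHi_of_even ht, D.xiLo_of_even (ht.add even_two), show t + 2 - 1 = t + 1 by ring]
    linarith [S.s_add_two_le_s_succ h1 hp]
  · rw [D.xiHi_of_odd ht, D.xiLo_of_odd (ht.add_even even_two), show t + 2 - 1 = t + 1 by ring]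
    have hgap := S.two_mul_s_succ_sub_of_odd ht h1 hp
    have := D.hi_le t
    have := D.one_le_lo (t + 2)
    have := S.hl
    rcases S.d_eq_two_or_l_eq_two_or_four_le_d with hd | hl | hd
    · have : D.hi t ≤ D.lo (t + 2) + 1 := by
        rcases h1.lt_or_eq with h1 | rfl
        · exact hrig.hi_le_lo_add_two_add_one hd ht (by omega) (by omega)
        · rw [D.hi_of_not_nonempty fun h => by
            have := D.two_le_and_le_p_of_nonempty h; omega]
          omega
      rw [hd] at hgap
      linarith
    · rw [hl] at hgap ⊢
      have := S.hd
      linarith [D.hi_nonneg t, D.lo_le_l (t + 2)]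
    · nlinarith [D.hi_nonneg t, D.lo_le_l (t + 2)]

theorem Rigid.m_add_m_succ_add_lo_add_lo_succ_le (hrig : D.Rigid) {j : ℤ} (hj : Even j)
    (h2 : 2 ≤ j) (hp : j ≤ S.p) (h0 : (D.X j).Nonempty) (h1 : (D.X (j + 1)).Nonempty) :
    D.m j + D.m (j + 1) + D.lo j + D.lo (j + 1) ≤ S.l + 1 := by
  linarith [hrig.hi_add_hi_succ_le hj h2 hp, D.m_le_hi_sub_lo_add_one h0,
    D.m_le_hi_sub_lo_add_one h1]

theorem Rigid.m_add_m_succ_le_l_sub_lo_of_even (hrig : D.Rigid) {j : ℤ} (hj : Even j)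
    (h2 : 2 ≤ j) (hp : j ≤ S.p) (h0 : (D.X j).Nonempty) :
    D.m j + D.m (j + 1) ≤ S.l - D.lo j := by
  by_cases h1 : (D.X (j + 1)).Nonempty
  · linarith [hrig.m_add_m_succ_add_lo_add_lo_succ_le hj h2 hp h0 h1, D.one_le_lo (j + 1)]
  · linarith [D.m_of_not_nonempty h1, D.m_le_l_sub_lo j]

theorem Rigid.m_add_m_succ_le_l_sub_lo_succ_of_even (hrig : D.Rigid) {j : ℤ} (hj : Even j)
    (h2 : 2 ≤ j) (hp : j ≤ S.p) (h1 : (D.X (j + 1)).Nonempty) :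
    D.m j + D.m (j + 1) ≤ S.l - D.lo (j + 1) := by
  by_cases h0 : (D.X j).Nonempty
  · linarith [hrig.m_add_m_succ_add_lo_add_lo_succ_le hj h2 hp h0 h1, D.one_le_lo j]
  · linarith [D.m_of_not_nonempty h0, D.m_le_l_sub_lo (j + 1)]

theorem Rigid.m_add_m_succ_le_hi_of_odd (hrig : D.Rigid) {j : ℤ} (hj : Odd j) (h2 : 2 ≤ j)
    (hp : j ≤ S.p) (h0 : (D.X j).Nonempty) : D.m j + D.m (j + 1) ≤ D.hi j := by
  linarith [hrig.l_lt_lo_add_lo_succ hj h2 hp, D.m_le_hi_sub_lo_add_one h0,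
    D.m_le_l_sub_lo (j + 1)]

theorem Rigid.m_add_m_succ_add_m_add_two_le (hrig : D.Rigid) {j : ℤ} (hj : Even j) (h2 : 2 ≤ j)
    (hp : j + 1 ≤ S.p) (h1 : (D.X (j + 1)).Nonempty) :
    D.m j + D.m (j + 1) + D.m (j + 2) ≤ S.l - 1 := by
  have := hrig.m_add_m_succ_le_hi_of_odd hj.add_one (by omega) hp h1
  rw [show j + 1 + 1 = j + 2 by ring] at this
  linarith [hrig.hi_add_hi_succ_le hj h2 (by omega), D.m_le_hi j]

variable (D)

def HasFreeCover (k : ℤ) (P : ℤ → Prop) : Prop :=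
  ∃ A ⊆ D.free, D.msum k ≤ #A ∧ ∀ a ∈ A, P a

def Clean (t : ℤ) : Prop := D.HasFreeCover t (· < D.xiLo (t + 1))

def Prepaid (t : ℤ) : Prop := D.HasFreeCover (t + 1) (· ≤ D.xiHi t)

/-- `𝖡_t` is free and reserved for `m_t`, but not yet added: the window chosen for `t + 1` may
overlap it, and then pays for `m_t` instead. -/
def Deferred (t : ℤ) : Prop :=
  Even t ∧ (D.X t).Nonempty ∧ Disjoint D.R (D.BI t) ∧ D.Clean (t - 1)

def SweepState (t : ℤ) : Prop := D.Clean t ∨ D.Prepaid t ∨ D.Deferred t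

variable {D}

theorem HasFreeCover.mono {k k' : ℤ} {P P' : ℤ → Prop} (h : D.HasFreeCover k P)
    (hk : D.msum k' ≤ D.msum k) (hP : ∀ a, P a → P' a) : D.HasFreeCover k' P' := by
  obtain ⟨A, hA, hcard, hAP⟩ := h
  exact ⟨A, hA, hk.trans hcard, fun a ha => hP a (hAP a ha)⟩

theorem HasFreeCover.union {k k' : ℤ} {P P' : ℤ → Prop} {G : Finset ℤ}
    (h : D.HasFreeCover k P) (hG : G ⊆ D.free) (hdisj : ∀ a, P a → a ∉ G)
    (hcount : D.msum k' ≤ D.msum k + #G) (hP : ∀ a, P a → P' a) (hGP : ∀ g ∈ G, P' g) :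
    D.HasFreeCover k' P' := by
  obtain ⟨A, hA, hcard, hAP⟩ := h
  have hd : Disjoint A G := disjoint_left.2 fun a ha => hdisj a (hAP a ha)
  refine ⟨A ∪ G, union_subset hA hG, ?_, fun a ha => ?_⟩
  · rw [card_union_of_disjoint hd]
    push_cast
    linarith
  · rcases mem_union.1 ha with ha | ha
    exacts [hP a (hAP a ha), hGP a ha]

theorem Clean.capped {t : ℤ} (h : D.Clean t) : D.HasFreeCover t (· ≤ D.xiHi t) :=
  HasFreeCover.mono h le_rfl fun a ha => by linarith [D.xiLo_succ_le_xiHi_add_one t]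

theorem Prepaid.capped {t : ℤ} (ht : 1 ≤ t) (h : D.Prepaid t) :
    D.HasFreeCover t (· ≤ D.xiHi t) :=
  HasFreeCover.mono h (by rw [D.msum_succ ht]; linarith [D.m_nonneg (t + 1)]) fun _ ha => ha

theorem prepaid_of_capped {t : ℤ} (ht : 1 ≤ t) (hX : ¬(D.X (t + 1)).Nonempty)
    (h : D.HasFreeCover t (· ≤ D.xiHi t)) : D.Prepaid t :=
  HasFreeCover.mono h (by rw [D.msum_succ ht, D.m_of_not_nonempty hX, add_zero]) fun _ ha => ha

theorem Rigid.capped_of_deferred (hrig : D.Rigid) {t : ℤ} (h : D.Deferred t) :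
    D.HasFreeCover t (· ≤ D.xiHi t) := by
  obtain ⟨-, hX, hR, hclean⟩ := h
  obtain ⟨h2, hp⟩ := D.two_le_and_le_p_of_nonempty hX
  have hBI := D.BI_subset_Icc h2 hp
  refine HasFreeCover.union hclean (hrig.BI_subset_free h2 hp hR) (fun a ha hg => ?_) ?_
    (fun a ha => ?_) fun g hg => (mem_Icc.1 (hBI hg)).2
  · rw [sub_add_cancel] at ha
    linarith [(mem_Icc.1 (hBI hg)).1]
  · rw [D.card_BI, D.msum_pred h2]
    linarith [D.m_le_hi t]
  · rw [sub_add_cancel] at ha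
    linarith [D.xiLo_le_xiHi h2 hp]

theorem Rigid.clean_succ_of_prepaid (hrig : D.Rigid) {t : ℤ} (ht : 1 ≤ t) (hp : t + 1 ≤ S.p)
    (h : D.Prepaid t) : D.Clean (t + 1) :=
  HasFreeCover.mono h le_rfl fun a ha => by
    rw [show t + 1 + 1 = t + 2 by ring]
    linarith [hrig.xiHi_lt_xiLo_add_two ht hp]

theorem Rigid.clean_of_clean_add_RI (hrig : D.Rigid) {k u : ℤ} (hu : Odd u) (h2 : 2 ≤ u)
    (hp : u ≤ S.p) (hB : Disjoint D.B (D.RI u)) (hk : D.Clean k)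
    (hle : D.xiLo (k + 1) ≤ D.xiLo u) (hcount : D.msum u ≤ D.msum k + (S.l - D.lo u)) :
    D.Clean u :=
  HasFreeCover.union hk (hrig.RI_subset_free h2 hp hB)
    (fun a ha hg => by linarith [(mem_Icc.1 (D.RI_subset_Icc h2 hp hg)).1])
    (by rwa [D.card_RI])
    (fun a ha => by linarith [D.xiLo_le_xiLo_succ h2 hp])
    fun g hg => D.lt_xiLo_succ_of_mem_RI hu h2 hp hg

theorem Rigid.prepaid_succ_of_clean_add_RI (hrig : D.Rigid) {t : ℤ} (ht : Odd t) (h1 : 1 ≤ t)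
    (hX : (D.X (t + 1)).Nonempty) (hB : Disjoint D.B (D.RI (t + 1))) (h : D.Clean t) :
    D.Prepaid (t + 1) := by
  obtain ⟨h2, hp⟩ := D.two_le_and_le_p_of_nonempty hX
  have hRI := D.RI_subset_Icc h2 hp
  refine HasFreeCover.union h (hrig.RI_subset_free h2 hp hB)
    (fun a ha hg => by linarith [(mem_Icc.1 (hRI hg)).1]) ?_
    (fun a ha => by linarith [D.xiLo_le_xiHi h2 hp]) fun g hg => (mem_Icc.1 (hRI hg)).2
  rw [D.card_RI, D.msum_succ (by omega), D.msum_succ h1]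
  linarith [hrig.m_add_m_succ_le_l_sub_lo_of_even ht.add_one h2 hp hX]

theorem Rigid.prepaid_succ_of_capped_add_BI (hrig : D.Rigid) {t : ℤ} (ht : Even t)
    (hX : (D.X (t + 1)).Nonempty) (hR : Disjoint D.R (D.BI (t + 1)))
    (h : D.HasFreeCover t (· ≤ D.xiHi t)) : D.Prepaid (t + 1) := by
  obtain ⟨h2, hp⟩ := D.two_le_and_le_p_of_nonempty hX
  have hBI := D.BI_subset_Icc h2 hp
  have hs := S.s_add_two_le_s_succ (by omega) hp
  have hxiHi : D.xiHi t = S.s t := D.xiHi_of_even ht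
  have hBI' : D.BI (t + 1) = Icc (S.s (t + 1)) (S.s (t + 1) + D.hi (t + 1) - 1) :=
    D.BI_of_odd ht.add_one
  refine HasFreeCover.union h (hrig.BI_subset_free h2 hp hR)
    (fun a ha hg => by rw [hBI', mem_Icc] at hg; omega) ?_
    (fun a ha => by rw [D.xiHi_of_odd ht.add_one]; linarith [D.hi_nonneg (t + 1)])
    fun g hg => (mem_Icc.1 (hBI hg)).2
  rw [D.card_BI, D.msum_succ (by omega), D.msum_succ (by omega)]
  linarith [hrig.m_add_m_succ_le_hi_of_odd ht.add_one h2 hp hX]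

theorem Rigid.prepaid_of_clean_add_window (hrig : D.Rigid) {k u x y : ℤ} (hk : D.Clean k)
    (hle : D.xiLo (k + 1) ≤ D.xiLo u) (h2 : 2 ≤ u) (hp : u ≤ S.p) (hxB : x ∈ D.B)
    (hx : x ∈ D.RI u) (hyR : y ∈ D.R) (hy : y ∈ D.BI u)
    (hcount : D.msum (u + 1) ≤ D.msum k + (S.l - 1)) : D.Prepaid u := by
  obtain ⟨W, hW, hcard, hWxy⟩ :=
    hrig.exists_window hxB hyR (hrig.lt_of_mem_RI_of_mem_BI h2 hp hxB hx hy)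
  have hxlo := (mem_Icc.1 (D.RI_subset_Icc h2 hp hx)).1
  have hyhi := (mem_Icc.1 (D.BI_subset_Icc h2 hp hy)).2
  refine HasFreeCover.union hk hW (fun a ha hw => ?_) (by rwa [hcard])
    (fun a ha => by linarith [D.xiLo_le_xiHi h2 hp]) fun w hw => by linarith [(hWxy w hw).2]
  linarith [(hWxy a hw).1]

theorem Rigid.sweepState_succ_of_clean (hrig : D.Rigid) {t : ℤ} (h1 : 1 ≤ t) (hp : t + 1 ≤ S.p)
    (h : D.Clean t) : D.SweepState (t + 1) := by
  by_cases hX : (D.X (t + 1)).Nonempty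
  swap
  · exact Or.inl (hrig.clean_succ_of_prepaid h1 hp (prepaid_of_capped h1 hX h.capped))
  by_cases hB : Disjoint D.B (D.RI (t + 1))
  · rcases Int.even_or_odd t with ht | ht
    · refine Or.inl (hrig.clean_of_clean_add_RI ht.add_one (by omega) hp hB h le_rfl ?_)
      rw [D.msum_succ h1]
      linarith [D.m_le_l_sub_lo (t + 1)]
    · exact Or.inr (Or.inl (hrig.prepaid_succ_of_clean_add_RI ht h1 hX hB h))
  by_cases hR : Disjoint D.R (D.BI (t + 1))
  · rcases Int.even_or_odd t with ht | ht
    · exact Or.inr (Or.inl (hrig.prepaid_succ_of_capped_add_BI ht hX hR h.capped))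
    · exact Or.inr (Or.inr ⟨ht.add_one, hX, hR, by rwa [add_sub_cancel_right]⟩)
  obtain ⟨x, hxB, hx⟩ := not_disjoint_iff.1 hB
  obtain ⟨y, hyR, hy⟩ := not_disjoint_iff.1 hR
  refine Or.inr (Or.inl (hrig.prepaid_of_clean_add_window h le_rfl (by omega) hp hxB hx hyR hy ?_))
  rw [D.msum_succ (by omega), D.msum_succ h1]
  rcases Int.even_or_odd t with ht | ht
  · linarith [hrig.m_add_m_succ_le_hi_of_odd ht.add_one (by omega) hp hX, D.hi_le (t + 1)]
  · have hX2 : ¬(D.X (t + 1 + 1)).Nonempty := fun hX2 =>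
      hR (hrig.disjoint_R_BI_of_even ht.add_one hX2)
    linarith [D.m_of_not_nonempty hX2, D.m_le_hi (t + 1), D.hi_le (t + 1)]

theorem Rigid.sweepState_succ_of_deferred (hrig : D.Rigid) {t : ℤ} (hp : t + 1 ≤ S.p)
    (h : D.Deferred t) : D.SweepState (t + 1) := by
  have hcapped := hrig.capped_of_deferred h
  obtain ⟨ht, hXt, -, hclean⟩ := h
  obtain ⟨h2, -⟩ := D.two_le_and_le_p_of_nonempty hXt
  have hle : D.xiLo (t - 1 + 1) ≤ D.xiLo (t + 1) := by
    rw [sub_add_cancel]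
    exact D.xiLo_le_xiLo_succ h2 (by omega)
  have hmsum := D.msum_pred h2
  by_cases hX : (D.X (t + 1)).Nonempty
  swap
  · exact Or.inl
      (hrig.clean_succ_of_prepaid (by omega) hp (prepaid_of_capped (by omega) hX hcapped))
  by_cases hB : Disjoint D.B (D.RI (t + 1))
  · refine Or.inl (hrig.clean_of_clean_add_RI ht.add_one (by omega) hp hB hclean hle ?_)
    rw [D.msum_succ (by omega)]
    linarith [hrig.m_add_m_succ_le_l_sub_lo_succ_of_even ht h2 (by omega) hX]
  by_cases hR : Disjoint D.R (D.BI (t + 1))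
  · exact Or.inr (Or.inl (hrig.prepaid_succ_of_capped_add_BI ht hX hR hcapped))
  obtain ⟨x, hxB, hx⟩ := not_disjoint_iff.1 hB
  obtain ⟨y, hyR, hy⟩ := not_disjoint_iff.1 hR
  refine Or.inr (Or.inl
    (hrig.prepaid_of_clean_add_window hclean hle (by omega) hp hxB hx hyR hy ?_))
  rw [D.msum_succ (by omega), D.msum_succ (by omega), show t + 1 + 1 = t + 2 by ring]
  linarith [hrig.m_add_m_succ_add_m_add_two_le ht h2 hp hX]

theorem Rigid.sweepState (hrig : D.Rigid) {t : ℤ} (h1 : 1 ≤ t) (hp : t ≤ S.p) :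
    D.SweepState t := by
  induction t, h1 using Int.leInduction with
  | base => exact Or.inl ⟨∅, empty_subset _, by simp [D.msum_one], by simp⟩
  | succ t ht ih =>
    rcases ih (by omega) with h | h | h
    · exact hrig.sweepState_succ_of_clean ht hp h
    · exact Or.inl (hrig.clean_succ_of_prepaid ht hp h)
    · exact hrig.sweepState_succ_of_deferred hp h

theorem Rigid.msum_p_le_card_free (hrig : D.Rigid) : D.msum S.p ≤ #D.free := by
  obtain ⟨A, hA, hcard, -⟩ : D.HasFreeCover S.p (· ≤ D.xiHi S.p) := by
    rcases hrig.sweepState S.hp le_rfl with h | h | h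
    exacts [h.capped, h.capped S.hp, hrig.capped_of_deferred h]
  exact hcard.trans (by exact_mod_cast card_le_card hA)

end CDatum

/-- a rigid `C`-datum has summand count at most `n`. -/
theorem stmt12 {S : NakSetup} (D : CDatum S) (hrig : D.Rigid) :
    D.count ≤ S.n := by
  have := hrig.msum_p_le_card_free
  have := D.card_free
  show (#D.R : ℤ) + #D.B + D.msum S.p ≤ S.n
  linarith
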